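/- Let R be a commutative ring, M = R^n, M' = R^(n-1), and ι : M' → M the embedding into the last n−1 coordinates. For any submodule N' of M', the real radical of N' in M' maps under ι into the real radical of ι(N') in M: ι(rr(N')) ⊆ rr(ι(N')). -/
import Mathlib


open TensorProduct

/-- The submodule `M ⊗ N + N ⊗ M` of `M ⊗[R] M` (for `M = R^n`), where `N` is
given by a subset `S` of `M`: it is spanned by pure tensors with one factor in `S`. -/
def tensMN {R : Type*} [CommRing R] {n : ℕ} (S : Set (Fin n → R)) :
    Submodule R ((Fin n → R) ⊗[R] (Fin n → R)) :=
  Submodule.span R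
    ({x | ∃ a : Fin n → R, ∃ b ∈ S, x = a ⊗ₜ[R] b} ∪
     {x | ∃ b ∈ S, ∃ a : Fin n → R, x = b ⊗ₜ[R] a})

/-- A submodule `N` of `M = R^n` is *real* if `∑ mᵢ ⊗ mᵢ ∈ M ⊗ N + N ⊗ M` implies
all `mᵢ ∈ N`. -/
def IsRealSubmodule {R : Type*} [CommRing R] {n : ℕ} (N : Submodule R (Fin n → R)) : Prop :=
  ∀ (K : ℕ) (m : Fin K → (Fin n → R)),
    (∑ i, m i ⊗ₜ[R] m i) ∈ tensMN (N : Set (Fin n → R)) → ∀ i, m i ∈ N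

/-- The real radical of a submodule of `R^n`: the smallest real submodule containing it. -/
noncomputable def realRadicalSub {R : Type*} [CommRing R] {n : ℕ}
    (N : Submodule R (Fin n → R)) : Submodule R (Fin n → R) :=
  sInf {P | IsRealSubmodule P ∧ N ≤ P}

/-- The auxiliary radical `α(S)` of a subset of `R^n`. -/
def auxRad {R : Type*} [CommRing R] {n : ℕ} (S : Set (Fin n → R)) : Set (Fin n → R) :=
  {f | ∃ (L : ℕ) (s : Fin L → (Fin n → R)),
    f ⊗ₜ[R] f + ∑ i, s i ⊗ₜ[R] s i ∈ tensMN S}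
/-- The embedding `R^n → R^(n+1)` into the last `n` coordinates. -/
def iotaL {R : Type*} [CommRing R] {n : ℕ} : (Fin n → R) →ₗ[R] (Fin (n + 1) → R) where
  toFun v := Fin.cons 0 v
  map_add' x y := by
    ext i; refine Fin.cases ?_ ?_ i <;> simp
  map_smul' c x := by
    ext i; refine Fin.cases ?_ ?_ i <;> simp

lemma tensMN_mono {R : Type*} [CommRing R] {n : ℕ} {S T : Set (Fin n → R)} (h : S ⊆ T) :
    tensMN S ≤ tensMN T := by
  apply Submodule.span_mono
  rintro x (⟨a, b, hb, rfl⟩ | ⟨b, hb, a, rfl⟩)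
  · exact Or.inl ⟨a, b, h hb, rfl⟩
  · exact Or.inr ⟨b, h hb, a, rfl⟩

lemma tensMN_map {R : Type*} [CommRing R] {n m : ℕ} (f : (Fin n → R) →ₗ[R] (Fin m → R))
    (S : Set (Fin n → R)) :
    Submodule.map (TensorProduct.map f f) (tensMN S) ≤ tensMN (f '' S) := by
  rw [tensMN, Submodule.map_span, Submodule.span_le]
  rintro _ ⟨x, (⟨a, b, hb, rfl⟩ | ⟨b, hb, a, rfl⟩), rfl⟩
  · exact Submodule.subset_span (Or.inl ⟨f a, f b, ⟨b, hb, rfl⟩, by simp⟩)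
  · exact Submodule.subset_span (Or.inr ⟨f b, ⟨b, hb, rfl⟩, f a, by simp⟩)

lemma isReal_comap {R : Type*} [CommRing R] {n m : ℕ} (f : (Fin n → R) →ₗ[R] (Fin m → R))
    {Q : Submodule R (Fin m → R)} (hQ : IsRealSubmodule Q) :
    IsRealSubmodule (Q.comap f) := by
  intro K v hv i
  set S : Set (Fin n → R) := (Q.comap f : Set (Fin n → R)) with hS
  have h0 : (TensorProduct.map f f) (∑ i, v i ⊗ₜ[R] v i) ∈
      Submodule.map (TensorProduct.map f f) (tensMN S) := Submodule.mem_map_of_mem hv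
  have h2 : (TensorProduct.map f f) (∑ i, v i ⊗ₜ[R] v i) ∈ tensMN (f '' S) :=
    tensMN_map f S h0
  have heq : (TensorProduct.map f f) (∑ i, v i ⊗ₜ[R] v i) =
      ∑ i, f (v i) ⊗ₜ[R] f (v i) := by
    rw [map_sum]
    exact Finset.sum_congr rfl fun i _ => TensorProduct.map_tmul f f (v i) (v i)
  rw [heq] at h2
  have h1 : (∑ i, f (v i) ⊗ₜ[R] f (v i)) ∈ tensMN (Q : Set (Fin m → R)) := by
    refine tensMN_mono ?_ h2
    rintro _ ⟨x, hx, rfl⟩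
    exact hx
  exact hQ K (fun i => f (v i)) h1 i

lemma isReal_realRadicalSub {R : Type*} [CommRing R] {n : ℕ} (N : Submodule R (Fin n → R)) :
    IsRealSubmodule (realRadicalSub N) := by
  intro K v hv i
  rw [realRadicalSub, Submodule.mem_sInf]
  intro P hP
  refine hP.1 K v (tensMN_mono ?_ hv) i
  intro x hx
  exact (Submodule.mem_sInf.mp hx) P hP

lemma le_realRadicalSub {R : Type*} [CommRing R] {n : ℕ} (N : Submodule R (Fin n → R)) :
    N ≤ realRadicalSub N :=
  le_sInf fun _ hP => hP.2

/-- `ι(rr(N')) ⊆ rr(ι(N'))` for the embedding `ι : R^(n-1) → R^n` into the last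
`n − 1` coordinates. -/
theorem stmt7 {R : Type*} [CommRing R] {n : ℕ} (N' : Submodule R (Fin n → R)) :
    Submodule.map (iotaL (R := R)) (realRadicalSub N') ≤
      realRadicalSub (Submodule.map (iotaL (R := R)) N') := by
  rw [Submodule.map_le_iff_le_comap]
  refine sInf_le ⟨isReal_comap _ (isReal_realRadicalSub _), ?_⟩
  intro x hx
  exact le_realRadicalSub _ (Submodule.mem_map_of_mem hx)
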